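/- arXiv:2605.20033 — 6 statements merged into one kernel-verified Lean document; each statement's English description precedes it below -/
import Mathlib

section
/- The linear system (1 + λ_i) s_i - (1/(n-1)) Σ_{j≠i} s_j = λ_i ŝ_i for i = 1, …, n has a unique solution s* ∈ ℝ^n, for every choice of raw scores ŝ ∈ ℝ^n and parameters λ_i > 0. -/
/-!
The system reads `A s = (λᵢ ŝᵢ)ᵢ` for the matrix `A` with diagonal entries `1 + λᵢ` and
off-diagonal entries `-1/(n-1)`. In each row the off-diagonal entries have absolute values summing
to at most `1 < 1 + λᵢ`, so `A` is strictly diagonally dominant, hence invertible by the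
Levy–Desplanques theorem (a consequence of Gershgorin's circle theorem).
-/

open Finset Matrix

theorem Matrix.existsUnique_mulVec_eq_of_sum_row_lt_diag {K ι : Type*} [NormedField K]
    [Fintype ι] [DecidableEq ι] {A : Matrix ι ι K}
    (h : ∀ k, ∑ j ∈ univ.erase k, ‖A k j‖ < ‖A k k‖) (b : ι → K) :
    ∃! x, A *ᵥ x = b := by
  have hA : IsUnit A := A.isUnit_iff_isUnit_det.mpr (det_ne_zero_of_sum_row_lt_diag h).isUnit
  exact Function.Bijective.existsUnique
    ⟨mulVec_injective_iff_isUnit.mpr hA, mulVec_surjective_iff_isUnit.mpr hA⟩ b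

noncomputable def equilibriumMatrix {ι : Type*} [Fintype ι] [DecidableEq ι] (lam : ι → ℝ) :
    Matrix ι ι ℝ :=
  Matrix.of fun i j => if i = j then 1 + lam i else -((Fintype.card ι : ℝ) - 1)⁻¹

section
variable {ι : Type*} [Fintype ι] [DecidableEq ι] (lam : ι → ℝ)

theorem equilibriumMatrix_mulVec_apply (s : ι → ℝ) (i : ι) :
    (equilibriumMatrix lam *ᵥ s) i
      = (1 + lam i) * s i - (∑ j ∈ univ.erase i, s j) / ((Fintype.card ι : ℝ) - 1) := by
  have hoff : ∀ j ∈ univ.erase i,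
      equilibriumMatrix lam i j * s j = -((Fintype.card ι : ℝ) - 1)⁻¹ * s j := fun j hj => by
    simp [equilibriumMatrix, (ne_of_mem_erase hj).symm]
  rw [mulVec, dotProduct, ← add_sum_erase _ _ (mem_univ i), sum_congr rfl hoff, ← mul_sum]
  simp only [equilibriumMatrix, of_apply, if_pos]
  ring

theorem equilibriumMatrix_sum_row_lt_diag (hlam : ∀ i, 0 < lam i) (i : ι) :
    ∑ j ∈ univ.erase i, ‖equilibriumMatrix lam i j‖ < ‖equilibriumMatrix lam i i‖ := by
  set m : ℝ := (Fintype.card ι : ℝ) - 1 with hm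
  have hcard : 1 ≤ Fintype.card ι := Fintype.card_pos_iff.mpr ⟨i⟩
  have hm_nonneg : 0 ≤ m := by rw [hm, sub_nonneg]; exact_mod_cast hcard
  have hoff : ∀ j ∈ univ.erase i, ‖equilibriumMatrix lam i j‖ = m⁻¹ := fun j hj => by
    simp [equilibriumMatrix, (ne_of_mem_erase hj).symm, ← hm, abs_of_nonneg hm_nonneg]
  have hdiag : ‖equilibriumMatrix lam i i‖ = 1 + lam i := by
    simp [equilibriumMatrix, abs_of_pos (by linarith [hlam i] : (0 : ℝ) < 1 + lam i)]
  calc ∑ j ∈ univ.erase i, ‖equilibriumMatrix lam i j‖ = m * m⁻¹ := by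
        rw [sum_congr rfl hoff, sum_const, card_erase_of_mem (mem_univ i), card_univ,
          nsmul_eq_mul, Nat.cast_sub hcard, Nat.cast_one]
    _ ≤ 1 := mul_inv_le_one
    _ < ‖equilibriumMatrix lam i i‖ := by rw [hdiag]; linarith [hlam i]
end

theorem stmt3_general (n : ℕ) (lam shat : Fin n → ℝ) (hlam : ∀ i, 0 < lam i) :
    ∃! s : Fin n → ℝ, ∀ i : Fin n,
      (1 + lam i) * s i - (∑ j ∈ Finset.univ.erase i, s j) / ((n : ℝ) - 1)
        = lam i * shat i := by
  simpa only [funext_iff, equilibriumMatrix_mulVec_apply, Fintype.card_fin] using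
    existsUnique_mulVec_eq_of_sum_row_lt_diag (equilibriumMatrix_sum_row_lt_diag lam hlam)
      (fun i => lam i * shat i)

/-- the linear equilibrium system has a unique solution. -/
theorem stmt3 (n : ℕ) (hn : 2 ≤ n) (lam shat : Fin n → ℝ) (hlam : ∀ i, 0 < lam i) :
    ∃! s : Fin n → ℝ, ∀ i : Fin n,
      (1 + lam i) * s i - (∑ j ∈ Finset.univ.erase i, s j) / ((n : ℝ) - 1)
        = lam i * shat i :=
  stmt3_general n lam shat hlam
end

section
/- The quadratic verification game with n ≥ 2 players and λ_i > 0 admits exactly one Nash equilibrium. -/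
noncomputable def meanOthers (n : ℕ) (s : Fin n → ℝ) (i : Fin n) : ℝ :=
  (∑ j ∈ Finset.univ.erase i, s j) / ((n : ℝ) - 1)

noncomputable def payoff (n : ℕ) (lam shat : Fin n → ℝ) (s : Fin n → ℝ) (i : Fin n) : ℝ :=
  -(s i - meanOthers n s i)^2 - lam i * (s i - shat i)^2

def NashEq (n : ℕ) (lam shat : Fin n → ℝ) (s : Fin n → ℝ) : Prop :=
  ∀ i : Fin n, ∀ x : ℝ,
    payoff n lam shat (Function.update s i x) i ≤ payoff n lam shat s i

lemma meanOthers_update (n : ℕ) (s : Fin n → ℝ) (i : Fin n) (x : ℝ) :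
    meanOthers n (Function.update s i x) i = meanOthers n s i := by
  unfold meanOthers
  congr 1
  refine Finset.sum_congr rfl fun j hj => ?_
  exact Function.update_of_ne (Finset.ne_of_mem_erase hj) x s

lemma quad_max (l a b c : ℝ) (hl : 0 < l) :
    (∀ x : ℝ, -(x - a)^2 - l * (x - b)^2 ≤ -(c - a)^2 - l * (c - b)^2) ↔
      (1 + l) * c = a + l * b := by
  constructor
  · intro h
    set d := a + l * b - (1 + l) * c with hd
    have hpos : (0:ℝ) < 1 + l := by linarith
    have := h (c + d / (1 + l))
    have hne : (1 + l) ≠ 0 := ne_of_gt hpos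
    have hd0 : d = 0 := by
      nlinarith [sq_nonneg d, mul_pos hpos hpos, sq_nonneg (d / (1+l)),
        (div_mul_cancel₀ d hne)]
    linarith [hd0, hd ▸ hd0]
  · intro h x
    have key : (-(c - a)^2 - l * (c - b)^2) - (-(x - a)^2 - l * (x - b)^2) =
        (1 + l) * (x - c)^2 - 2 * (x - c) * (a + l * b - (1 + l) * c) := by ring
    have h0 : a + l * b - (1 + l) * c = 0 := by linarith
    rw [h0] at key
    nlinarith [mul_nonneg (by linarith : (0:ℝ) ≤ 1 + l) (sq_nonneg (x - c))]

lemma nash_iff (n : ℕ) (lam shat : Fin n → ℝ) (hlam : ∀ i, 0 < lam i) (s : Fin n → ℝ) :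
    NashEq n lam shat s ↔ ∀ i, (1 + lam i) * s i = meanOthers n s i + lam i * shat i := by
  have key : ∀ i x, payoff n lam shat (Function.update s i x) i =
      -(x - meanOthers n s i)^2 - lam i * (x - shat i)^2 := by
    intro i x
    unfold payoff
    rw [meanOthers_update, Function.update_self]
  constructor
  · intro h i
    have h2 : ∀ x : ℝ, -(x - meanOthers n s i)^2 - lam i * (x - shat i)^2 ≤
        -(s i - meanOthers n s i)^2 - lam i * (s i - shat i)^2 := by
      intro x
      have := h i x
      rw [key i x] at this
      exact this
    exact (quad_max (lam i) (meanOthers n s i) (shat i) (s i) (hlam i)).mp h2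
  · intro h i x
    rw [key i x]
    exact (quad_max (lam i) (meanOthers n s i) (shat i) (s i) (hlam i)).mpr (h i) x

/-- the best-response linear map -/
noncomputable def Tmap (n : ℕ) (lam : Fin n → ℝ) : (Fin n → ℝ) →ₗ[ℝ] (Fin n → ℝ) where
  toFun s i := (1 + lam i) * s i - (∑ j ∈ Finset.univ.erase i, s j) / ((n : ℝ) - 1)
  map_add' s t := by
    funext i
    simp only [Pi.add_apply, Finset.sum_add_distrib]
    ring
  map_smul' c s := by
    funext i
    simp only [Pi.smul_apply, smul_eq_mul, RingHom.id_apply, ← Finset.mul_sum]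
    ring

lemma Tmap_inj (n : ℕ) (hn : 2 ≤ n) (lam : Fin n → ℝ) (hlam : ∀ i, 0 < lam i) :
    Function.Injective (Tmap n lam) := by
  rw [← LinearMap.ker_eq_bot, LinearMap.ker_eq_bot']
  intro u hu
  have hu' : ∀ i, (1 + lam i) * u i =
      (∑ j ∈ Finset.univ.erase i, u j) / ((n : ℝ) - 1) := by
    intro i
    have := congrFun hu i
    simp only [Tmap, LinearMap.coe_mk, AddHom.coe_mk, Pi.zero_apply] at this
    linarith
  have hne : Nonempty (Fin n) := ⟨⟨0, by omega⟩⟩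
  obtain ⟨i, _, hi⟩ := Finset.exists_max_image Finset.univ (fun j => |u j|)
    Finset.univ_nonempty
  have hn1 : (0:ℝ) < (n : ℝ) - 1 := by
    have : (2:ℝ) ≤ n := by exact_mod_cast hn
    linarith
  have hcard : (Finset.univ.erase i).card = n - 1 := by
    rw [Finset.card_erase_of_mem (Finset.mem_univ i), Finset.card_univ, Fintype.card_fin]
  have hsum : |∑ j ∈ Finset.univ.erase i, u j| ≤ ((n : ℝ) - 1) * |u i| := by
    calc |∑ j ∈ Finset.univ.erase i, u j| ≤ ∑ j ∈ Finset.univ.erase i, |u j| :=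
          Finset.abs_sum_le_sum_abs _ _
      _ ≤ ∑ j ∈ Finset.univ.erase i, |u i| :=
          Finset.sum_le_sum fun j _ => hi j (Finset.mem_univ j)
      _ = ((n : ℝ) - 1) * |u i| := by
          rw [Finset.sum_const, hcard, nsmul_eq_mul]
          push_cast [Nat.cast_sub (by omega : 1 ≤ n)]
          ring
  have hmean : |(∑ j ∈ Finset.univ.erase i, u j) / ((n : ℝ) - 1)| ≤ |u i| := by
    rw [abs_div, abs_of_pos hn1]
    rw [div_le_iff₀ hn1]
    linarith
  have h1 : (1 + lam i) * |u i| ≤ |u i| := by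
    have : |(1 + lam i) * u i| ≤ |u i| := by rw [hu' i]; exact hmean
    rwa [abs_mul, abs_of_pos (by linarith [hlam i] : (0:ℝ) < 1 + lam i)] at this
  have hui : u i = 0 := by
    have := hlam i
    have h2 : lam i * |u i| ≤ 0 := by nlinarith
    have := abs_nonneg (u i)
    have : |u i| = 0 := by nlinarith
    exact abs_eq_zero.mp this
  funext j
  have := hi j (Finset.mem_univ j)
  rw [hui, abs_zero] at this
  exact abs_eq_zero.mp (le_antisymm this (abs_nonneg _))

/-- the game admits exactly one Nash equilibrium. -/
theorem stmt5 (n : ℕ) (hn : 2 ≤ n) (lam shat : Fin n → ℝ) (hlam : ∀ i, 0 < lam i) :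
    ∃! s : Fin n → ℝ, NashEq n lam shat s := by
  have hinj := Tmap_inj n hn lam hlam
  have hsurj : Function.Surjective (Tmap n lam) :=
    (LinearMap.injective_iff_surjective).mp hinj
  have hchar : ∀ s : Fin n → ℝ, NashEq n lam shat s ↔
      Tmap n lam s = fun i => lam i * shat i := by
    intro s
    rw [nash_iff n lam shat hlam s]
    constructor
    · intro h
      funext i
      simp only [Tmap, LinearMap.coe_mk, AddHom.coe_mk]
      have := h i
      unfold meanOthers at this
      linarith
    · intro h i
      have := congrFun h i
      simp only [Tmap, LinearMap.coe_mk, AddHom.coe_mk] at this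
      unfold meanOthers
      linarith
  obtain ⟨s, hs⟩ := hsurj (fun i => lam i * shat i)
  exact ⟨s, (hchar s).mpr hs, fun t ht => hinj (((hchar t).mp ht).trans hs.symm)⟩
end

section
/- With equal parameters λ_i = λ > 0, the Nash equilibrium has the closed form s*_i = m + c (ŝ_i - m), where m = (1/n) Σ_j ŝ_j and c = λ(n-1)/(λ(n-1) + n). -/
/-!
Summing the equilibrium equations over all agents, the peer averages add up to the total score
again, so `λ Σ s* = λ Σ ŝ`: the equilibrium preserves the mean `m`. Substituting `Σ_{j≠i} s*_j = n m - s*_i`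
back into the `i`-th equation leaves a single linear equation `(λ(n-1) + n) s*_i = λ(n-1) ŝ_i + n m`.
-/

open Finset

section PeerEquilibrium

variable {K ι : Type*} [Field K] [Fintype ι] [DecidableEq ι]

def IsPeerEquilibrium (lam : K) (shat s : ι → K) : Prop :=
  ∀ i, (1 + lam) * s i - (∑ j ∈ univ.erase i, s j) / ((Fintype.card ι : K) - 1) = lam * shat i

variable {lam : K} {shat s : ι → K}

theorem IsPeerEquilibrium.sum_eq (hs : IsPeerEquilibrium lam shat s)
    (hN : (Fintype.card ι : K) - 1 ≠ 0) (hlam : lam ≠ 0) : ∑ i, s i = ∑ i, shat i := by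
  have hpeers : ∑ i, ∑ j ∈ univ.erase i, s j = ((Fintype.card ι : K) - 1) * ∑ i, s i := by
    simp only [sum_erase_eq_sub (mem_univ _), sum_sub_distrib, sum_const, card_univ, nsmul_eq_mul]
    ring
  have htotal := sum_congr rfl fun i (_ : i ∈ univ) => hs i
  rw [sum_sub_distrib, ← mul_sum, ← sum_div, hpeers, mul_div_cancel_left₀ _ hN, ← mul_sum] at htotal
  exact mul_left_cancel₀ hlam (by linear_combination htotal)

theorem IsPeerEquilibrium.eq_mean_add [CharZero K] (hs : IsPeerEquilibrium lam shat s)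
    (hN : (Fintype.card ι : K) - 1 ≠ 0) (hlam : lam ≠ 0)
    (hD : lam * ((Fintype.card ι : K) - 1) + Fintype.card ι ≠ 0) (i : ι) :
    s i = (∑ j, shat j) / Fintype.card ι
      + lam * ((Fintype.card ι : K) - 1) / (lam * ((Fintype.card ι : K) - 1) + Fintype.card ι)
        * (shat i - (∑ j, shat j) / Fintype.card ι) := by
  have hcard : (Fintype.card ι : K) ≠ 0 := Nat.cast_ne_zero.2 (Fintype.card_pos_iff.2 ⟨i⟩).ne'
  have hi := hs i
  rw [sum_erase_eq_sub (mem_univ i), hs.sum_eq hN hlam] at hi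
  field_simp at hi ⊢
  linear_combination (Fintype.card ι : K) * hi

end PeerEquilibrium

/-- equal-λ closed form `s*_i = m + c (ŝ_i − m)` with
`c = λ(n−1)/(λ(n−1)+n)`. -/
theorem stmt7 (n : ℕ) (hn : 2 ≤ n) (lam : ℝ) (hlam : 0 < lam) (shat sstar : Fin n → ℝ)
    (hsys : ∀ i : Fin n,
      (1 + lam) * sstar i - (∑ j ∈ Finset.univ.erase i, sstar j) / ((n : ℝ) - 1)
        = lam * shat i) :
    ∀ i : Fin n,
      sstar i = (∑ j, shat j) / n
        + (lam * ((n : ℝ) - 1) / (lam * ((n : ℝ) - 1) + n))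
            * (shat i - (∑ j, shat j) / n) := by
  have hN : (0 : ℝ) < n - 1 := sub_pos.2 (by exact_mod_cast hn)
  have hs : IsPeerEquilibrium lam shat sstar := by
    simpa only [IsPeerEquilibrium, Fintype.card_fin] using hsys
  intro i
  have hD : lam * ((n : ℝ) - 1) + n ≠ 0 := by positivity
  simpa only [Fintype.card_fin] using
    hs.eq_mean_add (by simpa only [Fintype.card_fin] using hN.ne') hlam.ne'
      (by simpa only [Fintype.card_fin] using hD) i
end

section
/- If all raw scores lie in [0,1], then every coordinate of the unique Nash equilibrium also lies in [0,1], for arbitrary parameters λ_i > 0. -/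
/-! At a maximal coordinate `M` of an equilibrium `s`, the average of the other coordinates is at
most `s M`, so the defining equation forces `lam M * s M ≤ lam M * shat M`, i.e. `s M ≤ shat M`.
Hence an upper bound on the raw scores bounds the equilibrium; lower bounds follow by
negating both `s` and `shat`, which preserves the (linear) equilibrium system. -/

open Finset

variable {ι : Type*} [Fintype ι] [DecidableEq ι]

lemma sum_erase_div_le_of_forall_le {f : ι → ℝ} {M : ι} (hM : ∀ j, f j ≤ f M)
    (hι : 1 < Fintype.card ι) :
    (∑ j ∈ univ.erase M, f j) / ((Fintype.card ι : ℝ) - 1) ≤ f M := by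
  have hcard : ((univ.erase M).card : ℝ) = (Fintype.card ι : ℝ) - 1 := by
    rw [card_erase_of_mem (mem_univ M), card_univ, Nat.cast_sub hι.le, Nat.cast_one]
  have hpos : (0 : ℝ) < (Fintype.card ι : ℝ) - 1 := by
    have : (1 : ℝ) < Fintype.card ι := by exact_mod_cast hι
    linarith
  rw [div_le_iff₀ hpos, ← hcard, mul_comm, ← nsmul_eq_mul]
  exact sum_le_card_nsmul _ _ _ fun j _ => hM j

def IsEquilibrium (lam shat s : ι → ℝ) : Prop :=
  ∀ i, (1 + lam i) * s i - (∑ j ∈ univ.erase i, s j) / ((Fintype.card ι : ℝ) - 1)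
    = lam i * shat i

namespace IsEquilibrium

variable {lam shat s : ι → ℝ}

lemma neg (h : IsEquilibrium lam shat s) : IsEquilibrium lam (-shat) (-s) := by
  intro i
  simp only [Pi.neg_apply, sum_neg_distrib]
  linear_combination -h i

lemma le_of_forall_le (h : IsEquilibrium lam shat s) (hι : 1 < Fintype.card ι)
    (hlam : ∀ i, 0 < lam i) {c : ℝ} (hc : ∀ i, shat i ≤ c) (i : ι) : s i ≤ c := by
  have : Nonempty ι := Fintype.card_pos_iff.mp (by omega)
  obtain ⟨M, hM⟩ := Finite.exists_max s
  have havg := sum_erase_div_le_of_forall_le hM hι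
  have hMle : s M ≤ shat M :=
    le_of_mul_le_mul_left (by linarith [h M]) (hlam M)
  exact (hM i).trans (hMle.trans (hc M))

lemma ge_of_forall_ge (h : IsEquilibrium lam shat s) (hι : 1 < Fintype.card ι)
    (hlam : ∀ i, 0 < lam i) {c : ℝ} (hc : ∀ i, c ≤ shat i) (i : ι) : c ≤ s i :=
  neg_le_neg_iff.mp (h.neg.le_of_forall_le hι hlam (fun j => neg_le_neg (hc j)) i)

end IsEquilibrium

/-- if all raw scores lie in `[0,1]`, so does every coordinate of the
Nash equilibrium. -/
theorem stmt9 (n : ℕ) (hn : 2 ≤ n) (lam shat : Fin n → ℝ) (hlam : ∀ i, 0 < lam i)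
    (hshat : ∀ i, shat i ∈ Set.Icc (0 : ℝ) 1) (sstar : Fin n → ℝ)
    (hsys : ∀ i : Fin n,
      (1 + lam i) * sstar i - (∑ j ∈ Finset.univ.erase i, sstar j) / ((n : ℝ) - 1)
        = lam i * shat i) :
    ∀ i, sstar i ∈ Set.Icc (0 : ℝ) 1 := by
  have heq : IsEquilibrium lam shat sstar := by
    simpa only [IsEquilibrium, Fintype.card_fin] using hsys
  have hcard : 1 < Fintype.card (Fin n) := by rw [Fintype.card_fin]; omega
  exact fun i => ⟨heq.ge_of_forall_ge hcard hlam (fun j => (hshat j).1) i,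
    heq.le_of_forall_le hcard hlam (fun j => (hshat j).2) i⟩
end

section
/- Each equilibrium coordinate is monotone in the corresponding raw score: with all other raw scores and all parameters fixed, the map ŝ_i ↦ s*_i (where s* is the unique Nash equilibrium) is strictly increasing. -/
/-!
Subtracting the systems for the raw scores `a < b` gives a system for `d = t - s` with right-hand
side `r = λ_i (b - a) e_i ≥ 0`. With `c = 1/(n-1)` and `D = ∑ d`, it reads
`(1 + λ_j + c) d_j = c D + r_j`. Summing `d_j = (c D + r_j) / (1 + λ_j + c)` over `j` gives
`D (1 - ∑ c / (1 + λ_j + c)) = ∑ r_j / (1 + λ_j + c) > 0`, and the bracket is positive because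
every summand `c / (1 + λ_j + c)` is below `1/n`. Hence `D > 0`, and then `d_i > 0`.
-/

open Finset

variable {ι : Type*} [Fintype ι]

lemma sum_div_one_add_add_lt_one [Nonempty ι] {c : ℝ} {lam : ι → ℝ} (hlam : ∀ j, 0 < lam j)
    (hc₀ : 0 ≤ c) (hc : c * (Fintype.card ι - 1) ≤ 1) :
    ∑ j, c / (1 + lam j + c) < 1 := by
  have hcard : (0 : ℝ) < Fintype.card ι := by exact_mod_cast Fintype.card_pos
  calc ∑ j, c / (1 + lam j + c)
      < ∑ _j : ι, 1 / (Fintype.card ι : ℝ) := by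
        refine sum_lt_sum_of_nonempty univ_nonempty fun j _ => ?_
        have := hlam j
        rw [div_lt_div_iff₀ (by linarith) hcard]
        linarith
    _ = 1 := by
        rw [sum_const, card_univ, nsmul_eq_mul]
        field_simp

variable [DecidableEq ι]

/-- With `c = 1/(n-1)`, the left-hand side of the paper's equilibrium system. -/
def peerOperator (c : ℝ) (lam s : ι → ℝ) (j : ι) : ℝ :=
  (1 + lam j) * s j - c * ∑ k ∈ univ.erase j, s k

lemma peerOperator_sub (c : ℝ) (lam s t : ι → ℝ) (j : ι) :
    peerOperator c lam (t - s) j = peerOperator c lam t j - peerOperator c lam s j := by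
  simp only [peerOperator, Pi.sub_apply, sum_sub_distrib]
  ring

lemma pos_of_peerOperator_nonneg {c : ℝ} {lam d : ι → ℝ} (hc₀ : 0 ≤ c)
    (hc : c * (Fintype.card ι - 1) ≤ 1) (hlam : ∀ j, 0 < lam j)
    (hd : ∀ j, 0 ≤ peerOperator c lam d j) {i : ι} (hi : 0 < peerOperator c lam d i) :
    0 < d i := by
  have : Nonempty ι := ⟨i⟩
  set D := ∑ k, d k
  set μ : ι → ℝ := fun j => 1 + lam j + c
  have hμ : ∀ j, 0 < μ j := fun j => by have := hlam j; simp only [μ]; linarith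
  have hcoord : ∀ j, d j = (c * D + peerOperator c lam d j) / μ j := fun j => by
    rw [eq_div_iff (hμ j).ne', peerOperator, sum_erase_eq_sub (mem_univ j)]
    ring
  have hbalance : D * (1 - ∑ j, c / μ j) = ∑ j, peerOperator c lam d j / μ j := by
    have hsum : D = D * ∑ j, c / μ j + ∑ j, peerOperator c lam d j / μ j := by
      conv_lhs => rw [show D = ∑ j, d j from rfl]
      rw [mul_sum, ← sum_add_distrib]
      refine sum_congr rfl fun j _ => ?_
      rw [hcoord j]
      ring
    linarith
  have hrhs : 0 < ∑ j, peerOperator c lam d j / μ j :=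
    sum_pos' (fun j _ => div_nonneg (hd j) (hμ j).le) ⟨i, mem_univ i, div_pos hi (hμ i)⟩
  have hD : 0 < D := pos_of_mul_pos_left (hbalance ▸ hrhs)
    (sub_pos.mpr (sum_div_one_add_add_lt_one hlam hc₀ hc)).le
  rw [hcoord i]
  exact div_pos (by positivity) (hμ i)

theorem stmt14_general (n : ℕ) (lam shat : Fin n → ℝ) (hlam : ∀ i, 0 < lam i)
    (i : Fin n) :
    ∀ a b : ℝ, a < b →
      ∀ s t : Fin n → ℝ,
        (∀ j : Fin n,
          (1 + lam j) * s j - (∑ k ∈ Finset.univ.erase j, s k) / ((n : ℝ) - 1)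
            = lam j * Function.update shat i a j) →
        (∀ j : Fin n,
          (1 + lam j) * t j - (∑ k ∈ Finset.univ.erase j, t k) / ((n : ℝ) - 1)
            = lam j * Function.update shat i b j) →
        s i < t i := by
  intro a b hab s t hs ht
  set c := ((n : ℝ) - 1)⁻¹
  have hincr : ∀ j, peerOperator c lam (t - s) j
      = lam j * (Function.update shat i b j - Function.update shat i a j) := fun j => by
    rw [peerOperator_sub, peerOperator, peerOperator]
    linear_combination ht j - hs j
  have hc₀ : 0 ≤ c := inv_nonneg.mpr (sub_nonneg.mpr (by exact_mod_cast i.pos))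
  have hc : c * (Fintype.card (Fin n) - 1) ≤ 1 := by
    rw [Fintype.card_fin]
    exact inv_mul_le_one
  have hd : ∀ j, 0 ≤ peerOperator c lam (t - s) j := fun j => by
    rw [hincr, Function.update_apply, Function.update_apply]
    split_ifs
    · exact mul_nonneg (hlam j).le (sub_nonneg.mpr hab.le)
    · simp
  have hi : 0 < peerOperator c lam (t - s) i := by
    rw [hincr, Function.update_self, Function.update_self]
    exact mul_pos (hlam i) (sub_pos.mpr hab)
  exact sub_pos.mp (pos_of_peerOperator_nonneg hc₀ hc hlam hd hi)

/-- each equilibrium coordinate is strictly increasing in the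
corresponding raw score (other raw scores and all parameters fixed). -/
theorem stmt14 (n : ℕ) (hn : 2 ≤ n) (lam shat : Fin n → ℝ) (hlam : ∀ i, 0 < lam i)
    (i : Fin n) :
    ∀ a b : ℝ, a < b →
      ∀ s t : Fin n → ℝ,
        (∀ j : Fin n,
          (1 + lam j) * s j - (∑ k ∈ Finset.univ.erase j, s k) / ((n : ℝ) - 1)
            = lam j * Function.update shat i a j) →
        (∀ j : Fin n,
          (1 + lam j) * t j - (∑ k ∈ Finset.univ.erase j, t k) / ((n : ℝ) - 1)
            = lam j * Function.update shat i b j) →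
        s i < t i :=
  stmt14_general n lam shat hlam i
end

section
/- The equilibrium map ŝ ↦ s*(ŝ) that sends raw scores to the unique Nash equilibrium is linear in ŝ, and it is a nonexpansive map in the sup norm: ‖s*(ŝ) − s*(t̂)‖_∞ ≤ ‖ŝ − t̂‖_∞ for all ŝ, t̂ ∈ ℝ^n. -/
/-!
Each equilibrium equation says that `s i` is the convex combination `(λ i ŝ i + a i) / (1 + λ i)`
of `ŝ i` and the average `a i` of the other scores, and `|a i| ≤ ‖s‖`. At a coordinate where
`|s i|` is largest this forces `|s i| ≤ |ŝ i|`, so every solution satisfies `‖s‖ ≤ ‖ŝ‖`. Hence the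
linear operator `M` on the left of the system is injective, so invertible, and the equilibrium map
`M⁻¹ ∘ λ` is linear and nonexpansive by the same estimate.
-/

open Finset

theorem norm_le_of_one_add_mul_eq_mul_add {ι : Type*} [Fintype ι] {lam s u a : ι → ℝ}
    (hlam : ∀ i, 0 < lam i) (ha : ‖a‖ ≤ ‖s‖)
    (h : ∀ i, (1 + lam i) * s i = lam i * u i + a i) : ‖s‖ ≤ ‖u‖ := by
  by_contra! hlt
  have hs : 0 < ‖s‖ := (norm_nonneg u).trans_lt hlt
  refine lt_irrefl ‖s‖ ((pi_norm_lt_iff hs).2 fun i => ?_)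
  have hi : (1 + lam i) * ‖s i‖ ≤ lam i * ‖u‖ + ‖s‖ := calc
    (1 + lam i) * ‖s i‖ = ‖(1 + lam i) * s i‖ := by
      rw [norm_mul, Real.norm_of_nonneg (r := 1 + lam i) (by linarith [hlam i])]
    _ = ‖lam i * u i + a i‖ := by rw [h i]
    _ ≤ lam i * ‖u i‖ + ‖a i‖ := by
      simpa [norm_mul, Real.norm_of_nonneg (hlam i).le] using norm_add_le (lam i * u i) (a i)
    _ ≤ lam i * ‖u‖ + ‖s‖ := by
      gcongr
      · exact (hlam i).le
      · exact norm_le_pi_norm u i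
      · exact (norm_le_pi_norm a i).trans ha
  nlinarith [hlam i]

theorem norm_sum_div_card_le {ι : Type*} [Fintype ι] (s : ι → ℝ) (t : Finset ι) :
    ‖(∑ j ∈ t, s j) / #t‖ ≤ ‖s‖ := by
  rw [norm_div, Real.norm_natCast]
  refine div_le_of_le_mul₀ (Nat.cast_nonneg _) (norm_nonneg s) ?_
  calc ‖∑ j ∈ t, s j‖ ≤ ∑ _j ∈ t, ‖s‖ := norm_sum_le_of_le t fun j _ => norm_le_pi_norm s j
    _ = ‖s‖ * #t := by rw [sum_const, nsmul_eq_mul, mul_comm]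

theorem norm_sum_erase_div_le {ι : Type*} [Fintype ι] [DecidableEq ι] (s : ι → ℝ) (i : ι) :
    ‖(∑ j ∈ univ.erase i, s j) / ((Fintype.card ι : ℝ) - 1)‖ ≤ ‖s‖ := by
  have hcard : ((#(univ.erase i) : ℕ) : ℝ) = (Fintype.card ι : ℝ) - 1 := by
    rw [card_erase_of_mem (mem_univ i), card_univ, Nat.cast_pred (Fintype.card_pos_iff.2 ⟨i⟩)]
  rw [← hcard]
  exact norm_sum_div_card_le s (univ.erase i)

section Equilibrium

variable {ι : Type*} [Fintype ι] [DecidableEq ι]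

/-- `s` is the equilibrium for raw scores `ŝ` iff `equilibriumOperator s = lam * ŝ`. -/
noncomputable def equilibriumOperator (lam : ι → ℝ) : (ι → ℝ) →ₗ[ℝ] (ι → ℝ) where
  toFun s i := (1 + lam i) * s i - (∑ j ∈ univ.erase i, s j) / ((Fintype.card ι : ℝ) - 1)
  map_add' s t := by
    funext i
    simp only [Pi.add_apply, sum_add_distrib]
    ring
  map_smul' c s := by
    funext i
    simp only [Pi.smul_apply, smul_eq_mul, RingHom.id_apply, ← mul_sum]
    ring

theorem equilibriumOperator_apply (lam s : ι → ℝ) (i : ι) :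
    equilibriumOperator lam s i
      = (1 + lam i) * s i - (∑ j ∈ univ.erase i, s j) / ((Fintype.card ι : ℝ) - 1) :=
  rfl

variable {lam : ι → ℝ}

theorem norm_le_of_equilibriumOperator_eq (hlam : ∀ i, 0 < lam i) {s u : ι → ℝ}
    (h : equilibriumOperator lam s = lam * u) : ‖s‖ ≤ ‖u‖ := by
  refine norm_le_of_one_add_mul_eq_mul_add hlam
    (a := fun i => (∑ j ∈ univ.erase i, s j) / ((Fintype.card ι : ℝ) - 1))
    ((pi_norm_le_iff_of_nonneg (norm_nonneg s)).2 (norm_sum_erase_div_le s)) fun i => ?_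
  have hi := congrFun h i
  rw [equilibriumOperator_apply, Pi.mul_apply] at hi
  linarith

theorem equilibriumOperator_injective (hlam : ∀ i, 0 < lam i) :
    Function.Injective (equilibriumOperator lam) := by
  refine (injective_iff_map_eq_zero _).2 fun s hs => norm_le_zero_iff.1 ?_
  simpa using norm_le_of_equilibriumOperator_eq hlam (u := 0) (by simpa using hs)

noncomputable def equilibriumMap (hlam : ∀ i, 0 < lam i) : (ι → ℝ) →ₗ[ℝ] (ι → ℝ) :=
  (LinearEquiv.ofInjectiveEndo _ (equilibriumOperator_injective hlam)).symm.toLinearMap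
    ∘ₗ LinearMap.mulLeft ℝ lam

theorem equilibriumOperator_equilibriumMap (hlam : ∀ i, 0 < lam i) (u : ι → ℝ) :
    equilibriumOperator lam (equilibriumMap hlam u) = lam * u :=
  (LinearEquiv.ofInjectiveEndo _ (equilibriumOperator_injective hlam)).apply_symm_apply _

theorem norm_equilibriumMap_le (hlam : ∀ i, 0 < lam i) (u : ι → ℝ) :
    ‖equilibriumMap hlam u‖ ≤ ‖u‖ :=
  norm_le_of_equilibriumOperator_eq hlam (equilibriumOperator_equilibriumMap hlam u)

end Equilibrium

theorem stmt19_general (n : ℕ) (lam : Fin n → ℝ) (hlam : ∀ i, 0 < lam i) :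
    ∃ A : (Fin n → ℝ) →ₗ[ℝ] (Fin n → ℝ),
      (∀ shat : Fin n → ℝ, ∀ i : Fin n,
        (1 + lam i) * A shat i - (∑ j ∈ Finset.univ.erase i, A shat j) / ((n : ℝ) - 1)
          = lam i * shat i) ∧
      ∀ shat that : Fin n → ℝ, ‖A shat - A that‖ ≤ ‖shat - that‖ := by
  refine ⟨equilibriumMap hlam, fun shat i => ?_, fun shat that => ?_⟩
  · simpa [equilibriumOperator_apply] using
      congrFun (equilibriumOperator_equilibriumMap hlam shat) i
  · rw [← map_sub]
    exact norm_equilibriumMap_le hlam _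

/-- the map from raw scores to the Nash equilibrium is linear and
nonexpansive in the sup norm. -/
theorem stmt19 (n : ℕ) (hn : 2 ≤ n) (lam : Fin n → ℝ) (hlam : ∀ i, 0 < lam i) :
    ∃ A : (Fin n → ℝ) →ₗ[ℝ] (Fin n → ℝ),
      (∀ shat : Fin n → ℝ, ∀ i : Fin n,
        (1 + lam i) * A shat i - (∑ j ∈ Finset.univ.erase i, A shat j) / ((n : ℝ) - 1)
          = lam i * shat i) ∧
      ∀ shat that : Fin n → ℝ, ‖A shat - A that‖ ≤ ‖shat - that‖ :=
  stmt19_general n lam hlam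
end
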